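/- Let {C_r}_{r≥0} be a convex foliation of ℝ^n and let γ : I → ℝ^n (I = [0, T∞) with T∞ ∈ (0,∞]) be a generalized orbit of the foliation. Then γ is a (continuous) self-contracted curve. -/

import Mathlib

open Set Metric Filter Topology RealInnerProductSpace

/-- A curve `γ : I → ℝⁿ` is *self-contracted* if for all `t₁ ≤ t₂ ≤ t₃` in `I`,
`‖γ t₁ - γ t₃‖ ≥ ‖γ t₂ - γ t₃‖`. -/
def SelfContracted {n : ℕ} (I : Set ℝ) (γ : ℝ → EuclideanSpace ℝ (Fin n)) : Prop :=
  ∀ t₁ ∈ I, ∀ t₂ ∈ I, ∀ t₃ ∈ I, t₁ ≤ t₂ → t₂ ≤ t₃ →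
    ‖γ t₂ - γ t₃‖ ≤ ‖γ t₁ - γ t₃‖

/-- The normal cone of a convex set `K` at a point `u₀`. -/
def normalCone {n : ℕ} (K : Set (EuclideanSpace ℝ (Fin n))) (u₀ : EuclideanSpace ℝ (Fin n)) :
    Set (EuclideanSpace ℝ (Fin n)) :=
  {v | ∀ u ∈ K, ⟪v, u - u₀⟫ ≤ 0}

/-- The set `sec⁻(τ)` of limits of backward unit secant vectors of the curve `γ` at `τ`. -/
def secMinus {n : ℕ} (I : Set ℝ) (γ : ℝ → EuclideanSpace ℝ (Fin n)) (τ : ℝ) :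
    Set (EuclideanSpace ℝ (Fin n)) :=
  {q | ‖q‖ = 1 ∧ ∃ t : ℕ → ℝ, (∀ k, t k ∈ I) ∧ (∀ k, t k < τ) ∧
    Tendsto t atTop (nhds τ) ∧
    Tendsto (fun k => ‖γ (t k) - γ τ‖⁻¹ • (γ (t k) - γ τ)) atTop (nhds q)}

/-- A family `{C r}_{r ≥ 0}` of nonempty compact convex sets is a *convex foliation* of
`ℝⁿ` if it is strictly nested (`r₁ < r₂ → C r₁ ⊆ int C r₂`) and the boundaries
`∂(C r)`, `r ≥ 0`, cover `ℝⁿ \ int (C 0)`. -/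
def IsConvexFoliation {n : ℕ} (C : ℝ → Set (EuclideanSpace ℝ (Fin n))) : Prop :=
  (∀ r, 0 ≤ r → (C r).Nonempty ∧ IsCompact (C r) ∧ Convex ℝ (C r)) ∧
  (∀ r₁ r₂, 0 ≤ r₁ → r₁ < r₂ → C r₁ ⊆ interior (C r₂)) ∧
  (⋃ r ∈ Ici (0 : ℝ), frontier (C r)) = univ \ interior (C 0)

/-- A continuous curve `γ : I → ℝⁿ` is a *generalized orbit* of the convex foliation
`{C r}` if its image avoids `int (C 0)`, the level function `r(·)` (determined by
`γ(t) ∈ ∂ C (r t)`) is strictly decreasing, and `sec⁻(t) ⊆ N_{C (r t)}(γ t)` for all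
`t ∈ I`. -/
def IsGeneralizedOrbit {n : ℕ} (C : ℝ → Set (EuclideanSpace ℝ (Fin n)))
    (I : Set ℝ) (γ : ℝ → EuclideanSpace ℝ (Fin n)) (r : ℝ → ℝ) : Prop :=
  ContinuousOn γ I ∧
  (∀ t ∈ I, γ t ∉ interior (C 0)) ∧
  (∀ t ∈ I, 0 ≤ r t ∧ γ t ∈ frontier (C (r t))) ∧
  (∀ t₁ ∈ I, ∀ t₂ ∈ I, t₁ < t₂ → r t₂ < r t₁) ∧
  (∀ t ∈ I, secMinus I γ t ⊆ normalCone (C (r t)) (γ t))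

/-! Fix `s` and study `f t = ‖γ t - γ s‖` on `[t₁, t₂]`, `t₂ < s`. For `τ < s` the point `γ s`
lies in the interior of `C (r τ)`, so every backward secant direction `q` at `τ`, being normal to
`C (r τ)` at `γ τ`, satisfies `⟪q, γ τ - γ s⟫ > 0`: approaching `τ` from the left, `f` cannot drop
below `f τ`. A continuous function on `[t₁, t₂]` with this one-sided local minimum property at
every point of `(t₁, t₂]` satisfies `f t₂ ≤ f t₁`. -/

theorem ContinuousOn.le_of_forall_eventually_nhdsLT_le {α β : Type*}
    [ConditionallyCompleteLinearOrder α] [TopologicalSpace α] [OrderTopology α] [DenselyOrdered α]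
    [LinearOrder β] [TopologicalSpace β] [OrderClosedTopology β]
    {f : α → β} {a b : α} (hab : a ≤ b) (hf : ContinuousOn f (Icc a b))
    (hloc : ∀ τ ∈ Ioc a b, ∀ᶠ t in 𝓝[<] τ, f τ ≤ f t) : f b ≤ f a := by
  by_contra! hlt
  set S := Icc a b ∩ f ⁻¹' Ici (f b)
  have hS : IsCompact S :=
    isCompact_Icc.of_isClosed_subset (hf.preimage_isClosed_of_isClosed isClosed_Icc isClosed_Ici)
      inter_subset_left
  obtain ⟨τ, ⟨⟨haτ, hτb⟩, hτ⟩, hleast⟩ := hS.exists_isLeast ⟨b, ⟨hab, le_rfl⟩, le_rfl⟩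
  have haτ : a < τ := haτ.lt_of_ne (by rintro rfl; exact (not_le.2 hlt) hτ)
  have := nhdsLT_neBot_of_exists_lt ⟨a, haτ⟩
  obtain ⟨t, hτt, hat, htτ⟩ := ((hloc τ ⟨haτ, hτb⟩).and (Ioo_mem_nhdsLT haτ)).exists
  exact htτ.not_ge (hleast ⟨⟨hat.le, htτ.le.trans hτb⟩, le_trans hτ hτt⟩)

/-- The hypothesis is this shape because `‖v + w‖² - ‖w‖² = 2 ‖v‖ (⟪‖v‖⁻¹ • v, w⟫ + ‖v‖ / 2)`. -/
theorem norm_le_norm_add_of_inner_normalize_nonneg {E : Type*} [NormedAddCommGroup E]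
    [InnerProductSpace ℝ E] {v w : E} (h : 0 ≤ ⟪‖v‖⁻¹ • v, w⟫ + ‖v‖ / 2) : ‖w‖ ≤ ‖v + w‖ := by
  rcases eq_or_ne v 0 with rfl | hv
  · simp
  have hv : 0 < ‖v‖ := norm_pos_iff.2 hv
  have hvw : 0 ≤ ‖v‖ ^ 2 + 2 * ⟪v, w⟫ := by
    have := mul_nonneg hv.le h
    rw [real_inner_smul_left, mul_add, ← mul_assoc, mul_inv_cancel₀ hv.ne', one_mul] at this
    linarith
  exact (sq_le_sq₀ (norm_nonneg _) (norm_nonneg _)).1 (by rw [norm_add_sq_real]; linarith)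

section Euclidean

variable {n : ℕ}

theorem inner_pos_of_mem_normalCone_of_mem_interior {K : Set (EuclideanSpace ℝ (Fin n))}
    {x z q : EuclideanSpace ℝ (Fin n)} (hq : q ∈ normalCone K x) (hq0 : q ≠ 0)
    (hz : z ∈ interior K) : 0 < ⟪q, x - z⟫ := by
  have hpath : Tendsto (fun δ : ℝ => z + δ • q) (𝓝[>] 0) (𝓝 z) :=
    tendsto_nhdsWithin_of_tendsto_nhds
      ((by fun_prop : Continuous fun δ : ℝ => z + δ • q).tendsto' 0 z (by simp))
  obtain ⟨δ, hδK, hδ⟩ :=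
    ((hpath.eventually (interior_mem_nhds.2 (mem_interior_iff_mem_nhds.1 hz))).and
      self_mem_nhdsWithin).exists
  have := hq _ (interior_subset hδK)
  rw [show z + δ • q - x = -(x - z) + δ • q by abel, inner_add_right, inner_neg_right,
    real_inner_smul_right, real_inner_self_eq_norm_sq] at this
  have : 0 < δ * ‖q‖ ^ 2 := mul_pos hδ (by positivity)
  linarith

theorem exists_mem_secMinus_tendsto {I : Set ℝ} {γ : ℝ → EuclideanSpace ℝ (Fin n)} {τ : ℝ}
    {t : ℕ → ℝ} (htI : ∀ k, t k ∈ I) (htτ : ∀ k, t k < τ) (ht : Tendsto t atTop (𝓝 τ))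
    (hne : ∀ k, γ (t k) ≠ γ τ) :
    ∃ q ∈ secMinus I γ τ, ∃ φ : ℕ → ℕ, StrictMono φ ∧
      Tendsto (fun k => ‖γ (t (φ k)) - γ τ‖⁻¹ • (γ (t (φ k)) - γ τ)) atTop (𝓝 q) := by
  have hunit : ∀ k, ‖γ (t k) - γ τ‖⁻¹ • (γ (t k) - γ τ) ∈ sphere 0 1 := fun k => by
    rw [mem_sphere_zero_iff_norm]
    exact norm_smul_inv_norm (sub_ne_zero.2 (hne k))
  obtain ⟨q, hq, φ, hφ, hlim⟩ := (isCompact_sphere 0 1).tendsto_subseq hunit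
  exact ⟨q, ⟨mem_sphere_zero_iff_norm.1 hq, t ∘ φ, fun k => htI _, fun k => htτ _,
    ht.comp hφ.tendsto_atTop, hlim⟩, φ, hφ, hlim⟩

theorem eventually_norm_sub_le_of_forall_secMinus {I : Set ℝ}
    {γ : ℝ → EuclideanSpace ℝ (Fin n)} {τ : ℝ} {z : EuclideanSpace ℝ (Fin n)}
    (hγ : ContinuousWithinAt γ I τ) (hsec : ∀ q ∈ secMinus I γ τ, 0 < ⟪q, γ τ - z⟫) :
    ∀ᶠ t in 𝓝[I ∩ Iio τ] τ, ‖γ τ - z‖ ≤ ‖γ t - z‖ := by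
  by_contra h
  simp only [not_eventually, not_le] at h
  obtain ⟨t, ht, hcloser⟩ := frequently_iff_seq_forall.1 (h.and_eventually self_mem_nhdsWithin)
  have hne : ∀ k, γ (t k) ≠ γ τ := fun k he => (hcloser k).1.ne (by rw [he])
  obtain ⟨q, hq, φ, hφ, hlim⟩ := exists_mem_secMinus_tendsto (fun k => (hcloser k).2.1)
    (fun k => (hcloser k).2.2) (ht.mono_right nhdsWithin_le_nhds) hne
  have hγlim : Tendsto (fun k => γ (t (φ k)) - γ τ) atTop (𝓝 0) := by
    rw [← sub_self (γ τ)]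
    exact ((hγ.tendsto.comp (ht.mono_right (nhdsWithin_mono _ inter_subset_left))).comp
      hφ.tendsto_atTop).sub_const _
  have hpos : Tendsto (fun k => ⟪‖γ (t (φ k)) - γ τ‖⁻¹ • (γ (t (φ k)) - γ τ), γ τ - z⟫ +
      ‖γ (t (φ k)) - γ τ‖ / 2) atTop (𝓝 (⟪q, γ τ - z⟫ + ‖(0 : EuclideanSpace ℝ (Fin n))‖ / 2)) :=
    (hlim.inner tendsto_const_nhds).add (hγlim.norm.div_const 2)
  obtain ⟨k, hk⟩ := (hpos.eventually_const_lt (by simpa using hsec q hq)).exists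
  have := norm_le_norm_add_of_inner_normalize_nonneg hk.le
  rw [sub_add_sub_cancel] at this
  exact (hcloser (φ k)).1.not_ge this

namespace IsGeneralizedOrbit

variable {C : ℝ → Set (EuclideanSpace ℝ (Fin n))} {I : Set ℝ}
  {γ : ℝ → EuclideanSpace ℝ (Fin n)} {r : ℝ → ℝ}

theorem mem_interior_of_lt (hC : IsConvexFoliation C) (hγ : IsGeneralizedOrbit C I γ r)
    {τ s : ℝ} (hτ : τ ∈ I) (hs : s ∈ I) (hτs : τ < s) : γ s ∈ interior (C (r τ)) := by
  obtain ⟨hrs, hγs⟩ := hγ.2.2.1 s hs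
  exact hC.2.1 _ _ hrs (hγ.2.2.2.1 τ hτ s hs hτs)
    ((hC.1 _ hrs).2.1.isClosed.frontier_subset hγs)

theorem eventually_norm_sub_le (hC : IsConvexFoliation C) (hγ : IsGeneralizedOrbit C I γ r)
    {τ s : ℝ} (hτ : τ ∈ I) (hs : s ∈ I) (hτs : τ < s) :
    ∀ᶠ t in 𝓝[I ∩ Iio τ] τ, ‖γ τ - γ s‖ ≤ ‖γ t - γ s‖ :=
  eventually_norm_sub_le_of_forall_secMinus (hγ.1 τ hτ) fun _ hq =>
    inner_pos_of_mem_normalCone_of_mem_interior (hγ.2.2.2.2 τ hτ hq)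
      (norm_ne_zero_iff.1 (hq.1.symm ▸ one_ne_zero)) (hγ.mem_interior_of_lt hC hτ hs hτs)

theorem selfContracted (hC : IsConvexFoliation C) (hγ : IsGeneralizedOrbit C I γ r)
    (hI : I.OrdConnected) : SelfContracted I γ := by
  intro t₁ h₁ t₂ h₂ t₃ h₃ h12 h23
  rcases h23.eq_or_lt with rfl | h23
  · simp
  have hsub : Icc t₁ t₂ ⊆ I := hI.out h₁ h₂
  refine ContinuousOn.le_of_forall_eventually_nhdsLT_le (f := fun t => ‖γ t - γ t₃‖) h12
    ((hγ.1.mono hsub).sub continuousOn_const).norm fun τ hτ => ?_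
  refine nhdsWithin_le_of_mem ?_
    (hγ.eventually_norm_sub_le hC (hsub (Ioc_subset_Icc_self hτ)) h₃ (hτ.2.trans_lt h23))
  exact mem_of_superset (Ioo_mem_nhdsLT hτ.1) fun t ht =>
    ⟨hsub ⟨ht.1.le, ht.2.le.trans hτ.2⟩, ht.2⟩

end IsGeneralizedOrbit

end Euclidean

theorem generalizedOrbit_selfContracted_general {n : ℕ}
    (C : ℝ → Set (EuclideanSpace ℝ (Fin n))) (hC : IsConvexFoliation C)
    (T : ENNReal) (I : Set ℝ)
    (hI : I = {t : ℝ | 0 ≤ t ∧ ENNReal.ofReal t < T})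
    (γ : ℝ → EuclideanSpace ℝ (Fin n)) (r : ℝ → ℝ)
    (hγ : IsGeneralizedOrbit C I γ r) :
    ContinuousOn γ I ∧ SelfContracted I γ := by
  refine ⟨hγ.1, hγ.selfContracted hC ?_⟩
  subst hI
  exact ⟨fun _ hx _ hy _ hz => ⟨hx.1.trans hz.1, (ENNReal.ofReal_le_ofReal hz.2).trans_lt hy.2⟩⟩

/-- Every generalized orbit of a convex foliation, on `I = [0, T∞)` with
`T∞ ∈ (0, ∞]`, is a (continuous) self-contracted curve. -/
theorem generalizedOrbit_selfContracted {n : ℕ}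
    (C : ℝ → Set (EuclideanSpace ℝ (Fin n))) (hC : IsConvexFoliation C)
    (T : ENNReal) (hT : 0 < T) (I : Set ℝ)
    (hI : I = {t : ℝ | 0 ≤ t ∧ ENNReal.ofReal t < T})
    (γ : ℝ → EuclideanSpace ℝ (Fin n)) (r : ℝ → ℝ)
    (hγ : IsGeneralizedOrbit C I γ r) :
    ContinuousOn γ I ∧ SelfContracted I γ :=
  generalizedOrbit_selfContracted_general C hC T I hI γ r hγ
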